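/- Set S = D(I_I − P^D_ℛ) and V = P^D_{𝒯^{⊥_D}} Z. Then the K×K matrix EᵀSE is invertible and VᵀB = −ZᵀSE(EᵀSE)⁻¹. -/

import Mathlib

open Matrix BigOperators

noncomputable section

/-- Cells `(j,k)` of a `(J+1) × (K+1)` contingency table. -/
abbrev Cell (J K : ℕ) := Fin (J + 1) × Fin (K + 1)

/-- Standard unit vector `e_{jk}` in `ℝ^I`. -/
def eV {J K : ℕ} (c : Cell J K) : Cell J K → ℝ := Pi.single c 1

/-- Row-sum vector `e_{j+} = Σ_k e_{jk}`. -/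
def eRow {J K : ℕ} (j : Fin (J + 1)) : Cell J K → ℝ := ∑ k : Fin (K + 1), eV (j, k)

/-- Column-sum vector `e_{+k} = Σ_j e_{jk}`. -/
def eCol {J K : ℕ} (k : Fin (K + 1)) : Cell J K → ℝ := ∑ j : Fin (J + 1), eV (j, k)

/-- The all-ones vector `e_{++}`. -/
def eAll (J K : ℕ) : Cell J K → ℝ := ∑ j : Fin (J + 1), ∑ k : Fin (K + 1), eV (j, k)

/-- The row space `ℛ = span{e_{0+},…,e_{J+}}`. -/
def rowSpace (J K : ℕ) : Submodule ℝ (Cell J K → ℝ) :=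
  Submodule.span ℝ (Set.range (eRow (J := J) (K := K)))

/-- The column space `𝒞 = span{e_{+0},…,e_{+K}}`. -/
def colSpace (J K : ℕ) : Submodule ℝ (Cell J K → ℝ) :=
  Submodule.span ℝ (Set.range (eCol (J := J) (K := K)))

/-- The diagonal space `𝒟 = span{e_{++}}`. -/
def diagSpace (J K : ℕ) : Submodule ℝ (Cell J K → ℝ) :=
  Submodule.span ℝ {eAll J K}

/-- The marginal space `𝒯 = ℛ + 𝒞`. -/
def margSpace (J K : ℕ) : Submodule ℝ (Cell J K → ℝ) := rowSpace J K ⊔ colSpace J K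

/-- `P` is the `D`-orthogonal projection matrix onto the subspace `S`:
`P x ∈ S` and `x - P x` is `D`-orthogonal to `S`, for every `x`. -/
def IsProjD {J K : ℕ} (D : Matrix (Cell J K) (Cell J K) ℝ) (S : Submodule ℝ (Cell J K → ℝ))
    (P : Matrix (Cell J K) (Cell J K) ℝ) : Prop :=
  ∀ x, P.mulVec x ∈ S ∧ ∀ s ∈ S, (x - P.mulVec x) ⬝ᵥ D.mulVec s = 0

/-- The `D`-orthogonal complement of a subspace `S`. -/
def perpD {J K : ℕ} (D : Matrix (Cell J K) (Cell J K) ℝ) (S : Submodule ℝ (Cell J K → ℝ)) :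
    Submodule ℝ (Cell J K → ℝ) where
  carrier := {x | ∀ t ∈ S, x ⬝ᵥ D.mulVec t = 0}
  add_mem' := by
    intro a b ha hb t ht
    simp only [Set.mem_setOf_eq] at *
    simp [add_dotProduct, ha t ht, hb t ht]
  zero_mem' := by
    intro t ht
    simp
  smul_mem' := by
    intro c a ha t ht
    simp only [Set.mem_setOf_eq] at *
    simp [smul_dotProduct, ha t ht]

/-- The vector `c_{jk} = e_{jk} + e_{00} - e_{j0} - e_{0k}` (for `1 ≤ j`, `1 ≤ k`). -/
def cVec {J K : ℕ} (j : Fin J) (k : Fin K) : Cell J K → ℝ :=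
  eV (j.succ, k.succ) + eV (0, 0) - eV (j.succ, 0) - eV (0, k.succ)

/-- The `I × (JK)` matrix `C` with columns `c_{jk}`. -/
def Cmat (J K : ℕ) : Matrix (Cell J K) (Fin J × Fin K) ℝ :=
  fun i jk => cVec jk.1 jk.2 i

/-- The vector `b_k = e_{0k} - e_{00}` (for `1 ≤ k`). -/
def bVec {J K : ℕ} (k : Fin K) : Cell J K → ℝ :=
  eV ((0 : Fin (J + 1)), k.succ) - eV (0, 0)

/-- The `I × K` matrix `B` with columns `b_k`. -/
def Bmat (J K : ℕ) : Matrix (Cell J K) (Fin K) ℝ :=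
  fun i k => bVec k i

/-- The `I × K` matrix `E` with columns `e_{+1},…,e_{+K}`. -/
def Emat (J K : ℕ) : Matrix (Cell J K) (Fin K) ℝ :=
  fun i k => eCol k.succ i

/-- Column space of a matrix. -/
def colSpan {m n : Type*} [Fintype n] (A : Matrix m n ℝ) : Submodule ℝ (m → ℝ) :=
  Submodule.span ℝ (Set.range fun j => fun i => A i j)

/-- The reduced `(JK) × L` covariate matrix `Z°` with rows `z_{jk}ᵀ`, `j,k ≥ 1`. -/
def Zred {J K : ℕ} {L : Type*} (Z : Matrix (Cell J K) L ℝ) : Matrix (Fin J × Fin K) L ℝ :=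
  fun jk => Z (jk.1.succ, jk.2.succ)

/-- The model space `ℋ = 𝒯 + col(Z)` of the log-linear model
`η_{jk} = α + ρ_j + γ_k + z_{jk}ᵀ θ`. -/
def modelSpace {J K : ℕ} {L : Type*} [Fintype L] (Z : Matrix (Cell J K) L ℝ) :
    Submodule ℝ (Cell J K → ℝ) :=
  margSpace J K ⊔ colSpan Z

end

/-!
Let `M = EᵀSE`. As `I - P^D_ℛ` is the `D`-orthogonal residual map, `cᵀMc = ‖(I - P^D_ℛ)Ec‖²_D`,
which vanishes only when `Ec ∈ ℛ`. Vectors of `ℛ` are constant along rows, whereas `Ec` is `0` in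
column `0` and `c` in columns `1, …, K`; so `M` is invertible.

For the identity split `B = W + U` with `W = SEM⁻¹`. The columns of `W` are `D`-images of vectors
of `𝒯`, so `VᵀW = 0`. The columns of `U` are Euclidean-orthogonal to `𝒯`: `Sᵀ` kills `ℛ`, the `b_k`
have zero row sums, and `EᵀU = EᵀB - MM⁻¹ = 0`. Hence the columns of `D⁻¹U` lie in `𝒯^{⊥_D}`,
to which the columns of `Z - V` are `D`-orthogonal, so `VᵀU = ZᵀU = -ZᵀW` because `ZᵀB = 0`.
-/

section DiagonalForm

variable {ι : Type*} [Fintype ι] [DecidableEq ι]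

lemma dotProduct_diagonal_mulVec_comm {R : Type*} [CommSemiring R] (μ x y : ι → R) :
    x ⬝ᵥ diagonal μ *ᵥ y = y ⬝ᵥ diagonal μ *ᵥ x := by
  rw [dotProduct_mulVec, ← mulVec_transpose, diagonal_transpose, dotProduct_comm]

lemma eq_zero_of_dotProduct_diagonal_mulVec_self {μ : ι → ℝ} (hμ : ∀ i, 0 < μ i) {x : ι → ℝ}
    (hx : x ⬝ᵥ diagonal μ *ᵥ x = 0) : x = 0 := by
  by_contra hx0
  simpa [hx] using (posDef_diagonal_iff.2 hμ).dotProduct_mulVec_pos hx0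

end DiagonalForm

lemma mul_one_sub_mulVec {ι R : Type*} [Fintype ι] [DecidableEq ι] [Ring R]
    (A P : Matrix ι ι R) (x : ι → R) : (A * (1 - P)) *ᵥ x = A *ᵥ (x - P *ᵥ x) := by
  rw [← mulVec_mulVec, sub_mulVec, one_mulVec]

lemma dotProduct_transpose_mul_mul_mulVec {m n R : Type*} [Fintype m] [Fintype n] [CommSemiring R]
    (A : Matrix m n R) (S : Matrix m m R) (c : n → R) :
    c ⬝ᵥ (Aᵀ * S * A) *ᵥ c = A *ᵥ c ⬝ᵥ S *ᵥ (A *ᵥ c) := by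
  rw [← mulVec_mulVec, ← mulVec_mulVec, dotProduct_mulVec c Aᵀ, vecMul_transpose]

namespace IsProjD

variable {J K : ℕ} {μ : Cell J K → ℝ} {T : Submodule ℝ (Cell J K → ℝ)}
  {P : Matrix (Cell J K) (Cell J K) ℝ}

lemma dotProduct_diagonal_mulVec_sub (hP : IsProjD (diagonal μ) T P) (x : Cell J K → ℝ)
    {t : Cell J K → ℝ} (ht : t ∈ T) : t ⬝ᵥ diagonal μ *ᵥ (x - P *ᵥ x) = 0 := by
  rw [dotProduct_diagonal_mulVec_comm]
  exact (hP x).2 t ht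

lemma mem_of_dotProduct_diagonal_mulVec_sub_eq_zero (hμ : ∀ i, 0 < μ i)
    (hP : IsProjD (diagonal μ) T P) {x : Cell J K → ℝ}
    (hx : x ⬝ᵥ diagonal μ *ᵥ (x - P *ᵥ x) = 0) : x ∈ T := by
  have hres : x - P *ᵥ x = 0 := by
    refine eq_zero_of_dotProduct_diagonal_mulVec_self hμ ?_
    rw [sub_dotProduct, hx, hP.dotProduct_diagonal_mulVec_sub x (hP x).1, sub_zero]
  rw [sub_eq_zero.1 hres]
  exact (hP x).1

lemma mulVec_dotProduct_eq_of_forall_dotProduct_eq_zero (hμ : ∀ i, μ i ≠ 0)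
    (hP : IsProjD (diagonal μ) (perpD (diagonal μ) T) P) (z : Cell J K → ℝ)
    {w : Cell J K → ℝ} (hw : ∀ t ∈ T, w ⬝ᵥ t = 0) : P *ᵥ z ⬝ᵥ w = z ⬝ᵥ w := by
  set u : Cell J K → ℝ := fun i => w i / μ i
  have hDu : diagonal μ *ᵥ u = w := by
    funext i
    simp [mulVec_diagonal, u, mul_div_cancel₀ _ (hμ i)]
  have hu : u ∈ perpD (diagonal μ) T := fun t ht => by
    rw [dotProduct_diagonal_mulVec_comm, hDu, dotProduct_comm]
    exact hw t ht
  have h := (hP z).2 u hu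
  rw [hDu, sub_dotProduct, sub_eq_zero] at h
  exact h.symm

end IsProjD

section Table

variable {J K : ℕ}

lemma eRow_apply (j : Fin (J + 1)) (i : Cell J K) : eRow j i = if i.1 = j then 1 else 0 := by
  rcases i with ⟨a, b⟩
  by_cases h : a = j <;> simp [eRow, eV, Pi.single_apply, h]

lemma eCol_apply (k : Fin (K + 1)) (i : Cell J K) : eCol k i = if i.2 = k then 1 else 0 := by
  rcases i with ⟨a, b⟩
  by_cases h : b = k <;> simp [eCol, eV, Pi.single_apply, h]

lemma dotProduct_eRow (v : Cell J K → ℝ) (j : Fin (J + 1)) : v ⬝ᵥ eRow j = ∑ k, v (j, k) := by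
  simp [eRow, eV, dotProduct_sum]

lemma dotProduct_eCol (v : Cell J K → ℝ) (k : Fin (K + 1)) : v ⬝ᵥ eCol k = ∑ j, v (j, k) := by
  simp [eCol, eV, dotProduct_sum]

lemma bVec_dotProduct (k : Fin K) (x : Cell J K → ℝ) :
    bVec k ⬝ᵥ x = x (0, k.succ) - x (0, 0) := by
  simp [bVec, eV, sub_dotProduct]

lemma apply_eq_of_mem_rowSpace {v : Cell J K → ℝ} (hv : v ∈ rowSpace J K)
    (j : Fin (J + 1)) (k : Fin (K + 1)) : v (j, k) = v (j, 0) := by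
  induction hv using Submodule.span_induction with
  | mem x hx =>
    obtain ⟨j', rfl⟩ := hx
    simp [eRow_apply]
  | zero => simp
  | add x y _ _ hx hy => simp [hx, hy]
  | smul c x _ hx => simp [hx]

lemma dotProduct_eq_zero_of_mem_margSpace {w : Cell J K → ℝ}
    (hrow : ∀ j, w ⬝ᵥ eRow j = 0) (hcol : ∀ k : Fin K, w ⬝ᵥ eCol k.succ = 0)
    {t : Cell J K → ℝ} (ht : t ∈ margSpace J K) : w ⬝ᵥ t = 0 := by
  have hcol₀ : w ⬝ᵥ eCol 0 = 0 := by
    -- `e_{+0} = Σ_j e_{j+} - Σ_{k ≥ 1} e_{+k}`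
    have htotal : ∑ k, w ⬝ᵥ eCol k = ∑ j, w ⬝ᵥ eRow j := by
      simp only [dotProduct_eRow, dotProduct_eCol]
      exact Finset.sum_comm
    simpa [Fin.sum_univ_succ, hrow, hcol] using htotal
  have hle : margSpace J K ≤ LinearMap.ker (dotProductBilin ℝ ℝ w) := by
    refine sup_le (Submodule.span_le.2 ?_) (Submodule.span_le.2 ?_)
    · rintro _ ⟨j, rfl⟩
      exact hrow j
    · rintro _ ⟨k, rfl⟩
      exact Fin.cases hcol₀ hcol k
  exact hle ht

lemma Emat_mulVec_apply_zero (c : Fin K → ℝ) (j : Fin (J + 1)) : (Emat J K *ᵥ c) (j, 0) = 0 := by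
  simp [mulVec, dotProduct, Emat, eCol_apply, (Fin.succ_ne_zero _).symm]

lemma Emat_mulVec_apply_succ (c : Fin K → ℝ) (j : Fin (J + 1)) (k : Fin K) :
    (Emat J K *ᵥ c) (j, k.succ) = c k := by
  simp [mulVec, dotProduct, Emat, eCol_apply]

lemma eq_zero_of_Emat_mulVec_mem_rowSpace {c : Fin K → ℝ} (hc : Emat J K *ᵥ c ∈ rowSpace J K) :
    c = 0 := by
  funext k
  rw [← Emat_mulVec_apply_succ c 0 k, apply_eq_of_mem_rowSpace hc, Emat_mulVec_apply_zero]
  rfl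

lemma Emat_mulVec_mem_margSpace (c : Fin K → ℝ) : Emat J K *ᵥ c ∈ margSpace J K := by
  have hspan : Submodule.span ℝ (Set.range (Emat J K).col) ≤ colSpace J K :=
    Submodule.span_mono (Set.range_subset_iff.2 fun k => ⟨k.succ, rfl⟩)
  refine Submodule.mem_sup_right (hspan ?_)
  rw [← range_mulVecLin]
  exact ⟨c, rfl⟩

lemma Emat_transpose_mul_Bmat : (Emat J K)ᵀ * Bmat J K = 1 := by
  ext k k'
  rw [mul_apply', dotProduct_comm]
  change bVec k' ⬝ᵥ eCol k.succ = _
  simp [bVec_dotProduct, eCol_apply, one_apply, eq_comm]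

lemma bVec_dotProduct_eRow (k : Fin K) (j : Fin (J + 1)) : bVec k ⬝ᵥ eRow j = 0 := by
  simp [bVec_dotProduct, eRow_apply]

lemma transpose_mul_Bmat_eq_zero {L : Type*} (Z : Matrix (Cell J K) L ℝ)
    (hZ : ∀ k, Z (0, k) = 0) : Zᵀ * Bmat J K = 0 := by
  ext l k
  rw [mul_apply', dotProduct_comm]
  simp [Bmat, bVec_dotProduct, hZ]

end Table

section Residual

variable {J K : ℕ} {μ : Cell J K → ℝ} {PR : Matrix (Cell J K) (Cell J K) ℝ}

lemma isUnit_Emat_transpose_mul_mul_Emat (hμ : ∀ i, 0 < μ i)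
    (hPR : IsProjD (diagonal μ) (rowSpace J K) PR) :
    IsUnit ((Emat J K)ᵀ * (diagonal μ * (1 - PR)) * Emat J K) := by
  rw [isUnit_iff_isUnit_det, isUnit_iff_ne_zero]
  intro hdet
  obtain ⟨c, hc0, hc⟩ := exists_mulVec_eq_zero_iff.2 hdet
  refine hc0 (eq_zero_of_Emat_mulVec_mem_rowSpace
    (hPR.mem_of_dotProduct_diagonal_mulVec_sub_eq_zero hμ ?_))
  rw [← mul_one_sub_mulVec, ← dotProduct_transpose_mul_mul_mulVec, hc, dotProduct_zero]

lemma Bmat_sub_col_dotProduct_eq_zero (hPR : IsProjD (diagonal μ) (rowSpace J K) PR)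
    (hM : IsUnit ((Emat J K)ᵀ * (diagonal μ * (1 - PR)) * Emat J K)) (k : Fin K)
    {t : Cell J K → ℝ} (ht : t ∈ margSpace J K) :
    (Bmat J K - diagonal μ * (1 - PR) *
      (Emat J K * ((Emat J K)ᵀ * (diagonal μ * (1 - PR)) * Emat J K)⁻¹))ᵀ k ⬝ᵥ t = 0 := by
  set M := (Emat J K)ᵀ * (diagonal μ * (1 - PR)) * Emat J K
  set U := Bmat J K - diagonal μ * (1 - PR) * (Emat J K * M⁻¹)
  have hEU : (Emat J K)ᵀ * U = 0 := by
    rw [Matrix.mul_sub, Emat_transpose_mul_Bmat, ← Matrix.mul_assoc, ← Matrix.mul_assoc,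
      mul_nonsing_inv _ ((isUnit_iff_isUnit_det _).1 hM), sub_self]
  refine dotProduct_eq_zero_of_mem_margSpace (fun j => ?_) (fun k' => ?_) ht
  · change (bVec k - (diagonal μ * (1 - PR)) *ᵥ (Emat J K * M⁻¹)ᵀ k) ⬝ᵥ eRow j = 0
    rw [sub_dotProduct, bVec_dotProduct_eRow, mul_one_sub_mulVec, dotProduct_comm,
      hPR.dotProduct_diagonal_mulVec_sub _ (Submodule.subset_span ⟨j, rfl⟩), sub_zero]
  · rw [dotProduct_comm]
    exact congrFun (congrFun hEU k') k

end Residual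

theorem VtB_representation_general
    {J K L : ℕ}
    (μ : Cell J K → ℝ) (hμ : ∀ i, 0 < μ i)
    (Z : Matrix (Cell J K) (Fin L) ℝ)
    (hZcol : ∀ k, Z (0, k) = 0)
    (PR : Matrix (Cell J K) (Cell J K) ℝ)
    (hPR : IsProjD (Matrix.diagonal μ) (rowSpace J K) PR)
    (PTperp : Matrix (Cell J K) (Cell J K) ℝ)
    (hPTperp : IsProjD (Matrix.diagonal μ) (perpD (Matrix.diagonal μ) (margSpace J K)) PTperp)
    (S : Matrix (Cell J K) (Cell J K) ℝ)
    (hS : S = Matrix.diagonal μ * (1 - PR))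
    (V : Matrix (Cell J K) (Fin L) ℝ) (hV : V = PTperp * Z) :
    IsUnit ((Emat J K)ᵀ * S * Emat J K) ∧
    Vᵀ * Bmat J K = -(Zᵀ * S * Emat J K * ((Emat J K)ᵀ * S * Emat J K)⁻¹) := by
  subst hS hV
  have hM := isUnit_Emat_transpose_mul_mul_Emat hμ hPR
  refine ⟨hM, ?_⟩
  set M := (Emat J K)ᵀ * (diagonal μ * (1 - PR)) * Emat J K
  set W := diagonal μ * (1 - PR) * (Emat J K * M⁻¹)
  have hVW : (PTperp * Z)ᵀ * W = 0 := by
    ext l k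
    change PTperp *ᵥ Zᵀ l ⬝ᵥ (diagonal μ * (1 - PR)) *ᵥ ((Emat J K * M⁻¹)ᵀ k) = 0
    rw [mul_one_sub_mulVec]
    refine (hPTperp _).1 _ (Submodule.sub_mem _ ?_ (Submodule.mem_sup_left (hPR _).1))
    exact Emat_mulVec_mem_margSpace _
  have hVU : (PTperp * Z)ᵀ * (Bmat J K - W) = Zᵀ * (Bmat J K - W) := by
    ext l k
    exact hPTperp.mulVec_dotProduct_eq_of_forall_dotProduct_eq_zero (fun i => (hμ i).ne') _
      fun t ht => Bmat_sub_col_dotProduct_eq_zero hPR hM k ht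
  calc (PTperp * Z)ᵀ * Bmat J K = (PTperp * Z)ᵀ * (Bmat J K - W) + (PTperp * Z)ᵀ * W := by
        rw [← Matrix.mul_add, sub_add_cancel]
    _ = Zᵀ * (Bmat J K - W) := by rw [hVW, hVU, add_zero]
    _ = -(Zᵀ * (diagonal μ * (1 - PR)) * Emat J K * M⁻¹) := by
        rw [Matrix.mul_sub, transpose_mul_Bmat_eq_zero Z hZcol, zero_sub]
        simp only [W, Matrix.mul_assoc]

/-- with `S = D(I − P^D_ℛ)` and `V = P^D_{𝒯^{⊥_D}} Z`, the matrix `EᵀSE`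
is invertible and `VᵀB = −ZᵀSE(EᵀSE)⁻¹`. -/
theorem VtB_representation
    {J K L : ℕ} (hJ : 1 ≤ J) (hK : 1 ≤ K) (hL : 1 ≤ L)
    (μ : Cell J K → ℝ) (hμ : ∀ i, 0 < μ i)
    (Z : Matrix (Cell J K) (Fin L) ℝ)
    (hZrow : ∀ j, Z (j, 0) = 0) (hZcol : ∀ k, Z (0, k) = 0)
    (PR : Matrix (Cell J K) (Cell J K) ℝ)
    (hPR : IsProjD (Matrix.diagonal μ) (rowSpace J K) PR)
    (PTperp : Matrix (Cell J K) (Cell J K) ℝ)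
    (hPTperp : IsProjD (Matrix.diagonal μ) (perpD (Matrix.diagonal μ) (margSpace J K)) PTperp)
    (S : Matrix (Cell J K) (Cell J K) ℝ)
    (hS : S = Matrix.diagonal μ * (1 - PR))
    (V : Matrix (Cell J K) (Fin L) ℝ) (hV : V = PTperp * Z) :
    IsUnit ((Emat J K)ᵀ * S * Emat J K) ∧
    Vᵀ * Bmat J K = -(Zᵀ * S * Emat J K * ((Emat J K)ᵀ * S * Emat J K)⁻¹) :=
  VtB_representation_general μ hμ Z hZcol PR hPR PTperp hPTperp S hS V hV
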